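/- arXiv:2212.09314 — 4 statements merged into one kernel-verified Lean document; each statement's English description precedes it below -/
import Mathlib

section
/- For all integers 0 ≤ r < n−1, it holds that ∑_{i=1}^n (q_i−1)²·s_r([n]∖{i}) = n(q̂_a−1)·s_{r+1} − (r+2)·s_{r+2}, where q̂_a = (1/n)∑_{i=1}^n q_i. -/
/-- The Hamming weight of `x ∈ Q = ∏ i, ℤ/q_iℤ`: the number of coordinates `i`
with `x i ≠ 0`. -/
def mwt {n : ℕ} {q : Fin n → ℕ} (x : ∀ i, ZMod (q i)) : ℕ :=
  (Finset.univ.filter (fun i => x i ≠ 0)).card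

/-- `sph q r` is `s_r`, the number of `x ∈ Q` with `wt(x) = r`. -/
noncomputable def sph {n : ℕ} (q : Fin n → ℕ) (r : ℕ) : ℕ :=
  Nat.card {x : ∀ i, ZMod (q i) // mwt x = r}

/-- `sphI q r I` is `s_r(I)`, the number of `x ∈ Q` with `wt(x) = r` and
`supp(x) ⊆ I`. -/
noncomputable def sphI {n : ℕ} (q : Fin n → ℕ) (r : ℕ) (I : Finset (Fin n)) : ℕ :=
  Nat.card {x : ∀ i, ZMod (q i) // mwt x = r ∧ ∀ i, x i ≠ 0 → i ∈ I}

/-!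
With `c i = q i - 1`, a word of weight `r` supported in `I` is an `r`-subset `S ⊆ I` together with
a nonzero letter at each position of `S`, so `s_r(I) = e_r(c|_I)` is an elementary symmetric
polynomial, and `n (q̂_a - 1) = ∑ c i = e_1`. The identity becomes
`e_1 e_{r+1} = ∑ᵢ cᵢ² e_r(c|_{[n]∖{i}}) + (r + 2) e_{r+2}`: multiplying `∏_T c` by `cᵢ` either
squares a factor (`i ∈ T`) or gives the product over the `(r + 2)`-set `T ∪ {i}`, and each such
set arises from `r + 2` choices of `i`.
-/

open Finset

section Support

variable {ι : Type*} [Fintype ι] [DecidableEq ι] {α : ι → Type*} [∀ i, Zero (α i)]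
  [∀ i, Fintype (α i)] [∀ i, DecidableEq (α i)]

theorem card_filter_support_eq (S : Finset ι) :
    #{x : ∀ i, α i | ({i | x i ≠ 0} : Finset ι) = S} = ∏ i ∈ S, (Fintype.card (α i) - 1) := by
  have hfilter : ({x : ∀ i, α i | ({i | x i ≠ 0} : Finset ι) = S} : Finset _) =
      Fintype.piFinset fun i => if i ∈ S then {0}ᶜ else {0} := by
    ext x
    simp only [mem_filter, mem_univ, true_and, Fintype.mem_piFinset, Finset.ext_iff]
    refine forall_congr' fun i => ?_
    by_cases hi : i ∈ S <;> simp [hi]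
  rw [hfilter, Fintype.card_piFinset]
  simp [apply_ite, card_compl, prod_ite_mem]

theorem card_filter_card_support_eq (r : ℕ) (I : Finset ι) :
    #{x : ∀ i, α i | #({i | x i ≠ 0} : Finset ι) = r ∧ ∀ i, x i ≠ 0 → i ∈ I}
      = ∑ S ∈ I.powersetCard r, ∏ i ∈ S, (Fintype.card (α i) - 1) := by
  rw [card_eq_sum_card_fiberwise (f := fun x : ∀ i, α i => ({i | x i ≠ 0} : Finset ι))]
  · refine sum_congr rfl fun S hS => ?_
    rw [← card_filter_support_eq, filter_filter]
    congr 1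
    refine filter_congr fun x _ => ⟨fun h => h.2, fun h => ⟨?_, h⟩⟩
    rw [mem_powersetCard] at hS
    subst h
    exact ⟨hS.2, fun i hi => hS.1 (by simpa using hi)⟩
  · intro x hx
    simp only [coe_filter, Set.mem_ofPred_eq, mem_univ, true_and] at hx
    rw [mem_coe, mem_powersetCard]
    exact ⟨fun i hi => hx.2 i (by simpa using hi), hx.1⟩

end Support

section Powerset

variable {ι M R : Type*} [DecidableEq ι] [AddCommMonoid M] [CommSemiring R]

theorem sum_powersetCard_succ_sum_erase (s : Finset ι) (k : ℕ) (f : ι → Finset ι → M) :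
    ∑ T ∈ s.powersetCard (k + 1), ∑ i ∈ T, f i (T.erase i)
      = ∑ i ∈ s, ∑ S ∈ (s.erase i).powersetCard k, f i S := by
  rw [sum_sigma', sum_sigma']
  refine sum_nbij' (fun p => ⟨p.2, p.1.erase p.2⟩) (fun p => ⟨insert p.1 p.2, p.1⟩)
    ?_ ?_ ?_ ?_ fun _ _ => rfl
  · rintro ⟨T, i⟩ hp
    simp only [mem_sigma, mem_powersetCard] at hp ⊢
    obtain ⟨⟨hTs, hTc⟩, hiT⟩ := hp
    exact ⟨hTs hiT, erase_subset_erase i hTs, by rw [card_erase_of_mem hiT, hTc]; rfl⟩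
  · rintro ⟨i, S⟩ hp
    simp only [mem_sigma, mem_powersetCard, subset_erase] at hp ⊢
    obtain ⟨his, ⟨hSs, hiS⟩, hSc⟩ := hp
    exact ⟨⟨insert_subset his hSs, by rw [card_insert_of_notMem hiS, hSc]⟩, mem_insert_self i S⟩
  · rintro ⟨T, i⟩ hp
    simp only [mem_sigma] at hp
    simp [insert_erase hp.2]
  · rintro ⟨i, S⟩ hp
    simp only [mem_sigma, mem_powersetCard, subset_erase] at hp
    simp [erase_insert hp.2.1.2]

theorem sum_powersetCard_sum_sdiff (s : Finset ι) (k : ℕ) (f : ι → Finset ι → M) :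
    ∑ T ∈ s.powersetCard k, ∑ i ∈ s \ T, f i T
      = ∑ i ∈ s, ∑ T ∈ (s.erase i).powersetCard k, f i T := by
  refine sum_comm' fun T i => ?_
  simp only [mem_powersetCard, mem_sdiff, subset_erase]
  tauto

theorem sum_mul_sum_powersetCard_prod (s : Finset ι) (k : ℕ) (c : ι → R) :
    (∑ i ∈ s, c i) * ∑ T ∈ s.powersetCard (k + 1), ∏ j ∈ T, c j
      = ∑ i ∈ s, c i ^ 2 * ∑ S ∈ (s.erase i).powersetCard k, ∏ j ∈ S, c j
        + (k + 2) * ∑ U ∈ s.powersetCard (k + 2), ∏ j ∈ U, c j := by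
  have hsplit : ∀ T ∈ s.powersetCard (k + 1),
      (∑ i ∈ s, c i) * ∏ j ∈ T, c j
        = ∑ i ∈ T, c i ^ 2 * ∏ j ∈ T.erase i, c j + ∑ i ∈ s \ T, c i * ∏ j ∈ T, c j := by
    intro T hT
    rw [← sum_sdiff (mem_powersetCard.1 hT).1, add_comm, add_mul, sum_mul, sum_mul]
    congr 1
    refine sum_congr rfl fun i hi => ?_
    rw [← mul_prod_erase T c hi]
    ring
  have hcount : ∀ U ∈ s.powersetCard (k + 2),
      ∑ i ∈ U, c i * ∏ j ∈ U.erase i, c j = (k + 2) * ∏ j ∈ U, c j := by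
    intro U hU
    rw [sum_congr rfl fun i hi => mul_prod_erase U c hi, sum_const,
      (mem_powersetCard.1 hU).2, nsmul_eq_mul]
    push_cast
    ring
  rw [mul_sum, sum_congr rfl hsplit, sum_add_distrib,
    sum_powersetCard_succ_sum_erase s k fun i S => c i ^ 2 * ∏ j ∈ S, c j,
    sum_powersetCard_sum_sdiff s (k + 1) fun i T => c i * ∏ j ∈ T, c j,
    ← sum_powersetCard_succ_sum_erase s (k + 1) fun i T => c i * ∏ j ∈ T, c j,
    sum_congr rfl hcount, ← mul_sum]
  simp_rw [mul_sum]

end Powerset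

theorem sph_eq_sphI_univ {n : ℕ} (q : Fin n → ℕ) (r : ℕ) : sph q r = sphI q r univ :=
  Nat.card_congr (Equiv.subtypeEquivRight (by simp))

theorem sphI_eq_sum_powersetCard_prod {n : ℕ} (q : Fin n → ℕ) [∀ i, NeZero (q i)] (r : ℕ)
    (I : Finset (Fin n)) : sphI q r I = ∑ S ∈ I.powersetCard r, ∏ i ∈ S, (q i - 1) := by
  rw [sphI, Nat.card_eq_fintype_card, Fintype.card_subtype]
  simpa [mwt, ZMod.card] using card_filter_card_support_eq (α := fun i => ZMod (q i)) r I

theorem cast_sphI {R : Type*} [CommRing R] {n : ℕ} (q : Fin n → ℕ) [∀ i, NeZero (q i)] (r : ℕ)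
    (I : Finset (Fin n)) :
    (sphI q r I : R) = ∑ S ∈ I.powersetCard r, ∏ i ∈ S, ((q i : R) - 1) := by
  rw [sphI_eq_sum_powersetCard_prod, Nat.cast_sum]
  refine sum_congr rfl fun S _ => ?_
  rw [Nat.cast_prod]
  exact prod_congr rfl fun i _ => Nat.cast_pred (NeZero.pos (q i))

theorem stmt2_general (n : ℕ) (hn : 1 ≤ n) (q : Fin n → ℕ) (hq : ∀ i, 2 ≤ q i) (r : ℕ) :
    ∑ i : Fin n, ((q i : ℝ) - 1) ^ 2 * sphI q r (Finset.univ.erase i)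
      = (n : ℝ) * ((∑ i : Fin n, (q i : ℝ)) / n - 1) * sph q (r + 1)
        - ((r : ℝ) + 2) * sph q (r + 2) := by
  have : ∀ i, NeZero (q i) := fun i => NeZero.of_pos (zero_lt_two.trans_le (hq i))
  have hmean : (n : ℝ) * ((∑ i, (q i : ℝ)) / n - 1) = ∑ i, ((q i : ℝ) - 1) := by
    rw [mul_sub, mul_div_cancel₀ _ (Nat.cast_ne_zero.2 (Nat.one_le_iff_ne_zero.1 hn)),
      sum_sub_distrib, sum_const, card_univ, Fintype.card_fin, nsmul_one, mul_one]
  rw [hmean, sph_eq_sphI_univ, sph_eq_sphI_univ, cast_sphI, cast_sphI,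
    sum_mul_sum_powersetCard_prod]
  simp only [cast_sphI]
  ring

/-- For all `0 ≤ r < n - 1`,
`∑_{i ∈ [n]} (q_i - 1)² s_r([n] \ {i}) = n (q̂_a - 1) s_{r+1} - (r+2) s_{r+2}`,
where `q̂_a = (1/n) ∑ q_i`. -/
theorem stmt2 (n : ℕ) (hn : 1 ≤ n) (q : Fin n → ℕ) (hq : ∀ i, 2 ≤ q i)
    (r : ℕ) (hr : r < n - 1) :
    ∑ i : Fin n, ((q i : ℝ) - 1) ^ 2 * sphI q r (Finset.univ.erase i)
      = (n : ℝ) * ((∑ i : Fin n, (q i : ℝ)) / n - 1) * sph q (r + 1)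
        - ((r : ℝ) + 2) * sph q (r + 2) :=
  stmt2_general n hn q hq r
end

section
/- For every integer 0 ≤ r < n, it holds that (q̂_mh−1)·(n−r)/(r+1) ≤ s_{r+1}/s_r ≤ (q̂_a−1)·(n−r)/(r+1), where q̂_a = (1/n)∑_{i=1}^n q_i and q̂_mh = n/(∑_{i=1}^n 1/(q_i−1)) + 1. -/
namespace MyAux

set_option linter.unusedSectionVars false
set_option linter.unusedVariables false

variable {ι : Type*} [DecidableEq ι]

/-- Elementary symmetric sum of degree `m` of `a` over `s`. -/
noncomputable def Es (a : ι → ℝ) (s : Finset ι) (m : ℕ) : ℝ :=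
  ∑ S ∈ s.powersetCard m, ∏ i ∈ S, a i

lemma Es_nonneg {a : ι → ℝ} (ha : ∀ i, 0 ≤ a i) (s : Finset ι) (m : ℕ) :
    0 ≤ Es a s m :=
  Finset.sum_nonneg fun S _ => Finset.prod_nonneg fun i _ => ha i

lemma Es_pos {a : ι → ℝ} (ha : ∀ i, 0 < a i) {s : Finset ι} {m : ℕ} (hm : m ≤ s.card) :
    0 < Es a s m := by
  obtain ⟨t, hts, htc⟩ := Finset.exists_subset_card_eq hm
  refine Finset.sum_pos (fun S _ => Finset.prod_pos fun i _ => ha i) ⟨t, ?_⟩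
  exact Finset.mem_powersetCard.2 ⟨hts, htc⟩

lemma Es_zero (a : ι → ℝ) (s : Finset ι) : Es a s 0 = 1 := by
  simp [Es]

lemma Es_split {a : ι → ℝ} {s : Finset ι} {i : ι} (hi : i ∈ s) (m : ℕ) :
    Es a s (m + 1) = Es a (s.erase i) (m + 1) + a i * Es a (s.erase i) m := by
  conv_lhs => rw [Es, ← Finset.insert_erase hi,
    Finset.powersetCard_succ_insert (Finset.notMem_erase i s)]
  rw [Finset.sum_union, Finset.sum_image]
  · congr 1
    rw [Es, Finset.mul_sum]
    refine Finset.sum_congr rfl fun S hS => ?_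
    have hiS : i ∉ S := fun h =>
      Finset.notMem_erase i s ((Finset.mem_powersetCard.1 hS).1 h)
    rw [Finset.prod_insert hiS]
  · intro S hS T hT hST
    have hiS : i ∉ S := fun h =>
      Finset.notMem_erase i s ((Finset.mem_powersetCard.1 hS).1 h)
    have hiT : i ∉ T := fun h =>
      Finset.notMem_erase i s ((Finset.mem_powersetCard.1 hT).1 h)
    rw [← Finset.erase_insert hiS, ← Finset.erase_insert hiT, hST]
  · rw [Finset.disjoint_right]
    rintro S hS hS'
    obtain ⟨T, hT, rfl⟩ := Finset.mem_image.1 hS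
    exact Finset.notMem_erase i s
      ((Finset.mem_powersetCard.1 hS').1 (Finset.mem_insert_self i T))

lemma sum_a_Es (a : ι → ℝ) (s : Finset ι) (m : ℕ) :
    ∑ i ∈ s, a i * Es a (s.erase i) m = (m + 1 : ℝ) * Es a s (m + 1) := by
  have hL : ∑ i ∈ s, a i * Es a (s.erase i) m
      = ∑ x ∈ s.sigma (fun i => (s.erase i).powersetCard m), a x.1 * ∏ j ∈ x.2, a j := by
    rw [Finset.sum_sigma]
    simp [Es, Finset.mul_sum]
  have hR : (m + 1 : ℝ) * Es a s (m + 1)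
      = ∑ y ∈ (s.powersetCard (m + 1)).sigma (fun T => T), a y.2 * ∏ j ∈ y.1.erase y.2, a j := by
    rw [Finset.sum_sigma, Es, Finset.mul_sum]
    refine Finset.sum_congr rfl fun T hT => ?_
    obtain ⟨hTs, hTc⟩ := Finset.mem_powersetCard.1 hT
    have : ∀ j ∈ T, a j * ∏ k ∈ T.erase j, a k = ∏ k ∈ T, a k := fun j hj =>
      Finset.mul_prod_erase T a hj
    rw [Finset.sum_congr rfl this, Finset.sum_const, hTc, nsmul_eq_mul]
    push_cast
    ring
  rw [hL, hR]
  refine Finset.sum_nbij' (fun x => ⟨insert x.1 x.2, x.1⟩) (fun y => ⟨y.2, y.1.erase y.2⟩)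
    ?_ ?_ ?_ ?_ ?_
  · rintro ⟨i, S⟩ hx
    obtain ⟨hi, hS⟩ := Finset.mem_sigma.1 hx
    obtain ⟨hSs, hSc⟩ := Finset.mem_powersetCard.1 hS
    have hiS : i ∉ S := fun h => Finset.notMem_erase i s (hSs h)
    refine Finset.mem_sigma.2 ⟨Finset.mem_powersetCard.2 ⟨?_, ?_⟩, Finset.mem_insert_self i S⟩
    · exact Finset.insert_subset hi (hSs.trans (Finset.erase_subset i s))
    · rw [Finset.card_insert_of_notMem hiS, hSc]
  · rintro ⟨T, j⟩ hy
    obtain ⟨hT, hj⟩ := Finset.mem_sigma.1 hy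
    obtain ⟨hTs, hTc⟩ := Finset.mem_powersetCard.1 hT
    refine Finset.mem_sigma.2 ⟨hTs hj, Finset.mem_powersetCard.2 ⟨?_, ?_⟩⟩
    · exact fun k hk => Finset.mem_erase.2
        ⟨(Finset.mem_erase.1 hk).1, hTs (Finset.mem_of_mem_erase hk)⟩
    · rw [Finset.card_erase_of_mem hj, hTc]
      omega
  · rintro ⟨i, S⟩ hx
    obtain ⟨hi, hS⟩ := Finset.mem_sigma.1 hx
    obtain ⟨hSs, _⟩ := Finset.mem_powersetCard.1 hS
    have hiS : i ∉ S := fun h => Finset.notMem_erase i s (hSs h)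
    simp [Finset.erase_insert hiS]
  · rintro ⟨T, j⟩ hy
    obtain ⟨hT, hj⟩ := Finset.mem_sigma.1 hy
    simp [Finset.insert_erase hj]
  · rintro ⟨i, S⟩ hx
    obtain ⟨hi, hS⟩ := Finset.mem_sigma.1 hx
    obtain ⟨hSs, _⟩ := Finset.mem_powersetCard.1 hS
    have hiS : i ∉ S := fun h => Finset.notMem_erase i s (hSs h)
    simp [Finset.erase_insert hiS]

lemma sum_Es (a : ι → ℝ) (s : Finset ι) {m : ℕ} (hm : m ≤ s.card) :
    ∑ i ∈ s, Es a (s.erase i) m = ((s.card : ℝ) - m) * Es a s m := by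
  have hL : ∑ i ∈ s, Es a (s.erase i) m
      = ∑ x ∈ s.sigma (fun i => (s.erase i).powersetCard m), ∏ j ∈ x.2, a j := by
    rw [Finset.sum_sigma]; simp [Es]
  have hR : ((s.card : ℝ) - m) * Es a s m
      = ∑ y ∈ (s.powersetCard m).sigma (fun S => s \ S), ∏ j ∈ y.1, a j := by
    rw [Finset.sum_sigma, Es, Finset.mul_sum]
    refine Finset.sum_congr rfl fun S hS => ?_
    obtain ⟨hSs, hSc⟩ := Finset.mem_powersetCard.1 hS
    simp only []
    rw [Finset.sum_const, nsmul_eq_mul, Finset.card_sdiff_of_subset hSs, hSc, Nat.cast_sub hm, mul_comm]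
  rw [hL, hR]
  refine Finset.sum_nbij' (fun x => ⟨x.2, x.1⟩) (fun y => ⟨y.2, y.1⟩) ?_ ?_ ?_ ?_ ?_
  · rintro ⟨i, S⟩ hx
    obtain ⟨hi, hS⟩ := Finset.mem_sigma.1 hx
    obtain ⟨hSs, hSc⟩ := Finset.mem_powersetCard.1 hS
    refine Finset.mem_sigma.2 ⟨Finset.mem_powersetCard.2
      ⟨hSs.trans (Finset.erase_subset i s), hSc⟩, ?_⟩
    refine Finset.mem_sdiff.2 ⟨hi, fun h => Finset.notMem_erase i s (hSs h)⟩
  · rintro ⟨S, i⟩ hy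
    obtain ⟨hS, hi⟩ := Finset.mem_sigma.1 hy
    obtain ⟨hSs, hSc⟩ := Finset.mem_powersetCard.1 hS
    obtain ⟨his, hiS⟩ := Finset.mem_sdiff.1 hi
    refine Finset.mem_sigma.2 ⟨his, Finset.mem_powersetCard.2 ⟨?_, hSc⟩⟩
    exact fun k hk => Finset.mem_erase.2
      ⟨fun h => hiS (by simp only at hk h ⊢; rw [← h]; exact hk), hSs hk⟩
  · rintro ⟨i, S⟩ _; rfl
  · rintro ⟨S, i⟩ _; rfl
  · rintro ⟨i, S⟩ _; rfl

lemma diff1 {a : ι → ℝ} (hnn : ∀ k, 0 ≤ a k) {s : Finset ι} {i j : ι}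
    (hi : i ∈ s) (hj : j ∈ s) (hij : i ≠ j) (m : ℕ) (hle : a i ≤ a j) :
    Es a (s.erase j) m ≤ Es a (s.erase i) m := by
  cases m with
  | zero => simp [Es_zero]
  | succ m =>
    have hj' : j ∈ s.erase i := Finset.mem_erase.2 ⟨hij.symm, hj⟩
    have hi' : i ∈ s.erase j := Finset.mem_erase.2 ⟨hij, hi⟩
    rw [Es_split hj' m, Es_split hi' m, Finset.erase_right_comm (a := i) (b := j)]
    have hF : 0 ≤ Es a ((s.erase j).erase i) m := Es_nonneg hnn _ _
    nlinarith [hF, hle]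

lemma diff2 {a : ι → ℝ} (hnn : ∀ k, 0 ≤ a k) {s : Finset ι} {i j : ι}
    (hi : i ∈ s) (hj : j ∈ s) (hij : i ≠ j) (m : ℕ) (hle : a i ≤ a j) :
    a i * Es a (s.erase i) m ≤ a j * Es a (s.erase j) m := by
  cases m with
  | zero => simpa [Es_zero] using hle
  | succ m =>
    have hj' : j ∈ s.erase i := Finset.mem_erase.2 ⟨hij.symm, hj⟩
    have hi' : i ∈ s.erase j := Finset.mem_erase.2 ⟨hij, hi⟩
    rw [Es_split hj' m, Es_split hi' m, Finset.erase_right_comm (a := i) (b := j)]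
    have hF : 0 ≤ Es a ((s.erase j).erase i) m := Es_nonneg hnn _ _
    have hE : 0 ≤ Es a ((s.erase j).erase i) (m + 1) := Es_nonneg hnn _ _
    nlinarith [hF, hE, hle]

end MyAux

lemma sph_eq {n : ℕ} (q : Fin n → ℕ) (hq : ∀ i, 2 ≤ q i) (r : ℕ) :
    sph q r = ∑ S ∈ Finset.powersetCard r (Finset.univ : Finset (Fin n)),
      ∏ i ∈ S, (q i - 1) := by
  haveI : ∀ i, NeZero (q i) := fun i => ⟨by have := hq i; omega⟩
  rw [sph, Nat.card_eq_fintype_card, Fintype.card_subtype]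
  rw [Finset.card_eq_sum_card_fiberwise
    (s := Finset.univ.filter (fun x : ∀ i, ZMod (q i) => mwt x = r))
    (f := fun x => Finset.univ.filter (fun i => x i ≠ 0))
    (t := Finset.powersetCard r Finset.univ)
    (fun x hx => Finset.mem_powersetCard.2
      ⟨Finset.subset_univ _, by exact (Finset.mem_filter.1 hx).2⟩)]
  refine Finset.sum_congr rfl fun S hS => ?_
  obtain ⟨-, hSc⟩ := Finset.mem_powersetCard.1 hS
  have key : (Finset.univ.filter (fun x : ∀ i, ZMod (q i) => mwt x = r)).filter
        (fun x => Finset.univ.filter (fun i => x i ≠ 0) = S)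
      = Fintype.piFinset (fun i => if i ∈ S then ({0}ᶜ : Finset (ZMod (q i))) else {0}) := by
    ext x
    rw [Finset.filter_filter, Finset.mem_filter, Fintype.mem_piFinset]
    constructor
    · rintro ⟨-, -, hsupp⟩ i
      by_cases hi : i ∈ S
      · simp only [hi, if_true, Finset.mem_compl, Finset.mem_singleton]
        have := hsupp ▸ hi
        exact (Finset.mem_filter.1 this).2
      · simp only [hi, if_false, Finset.mem_singleton]
        by_contra hx
        exact hi (hsupp ▸ Finset.mem_filter.2 ⟨Finset.mem_univ i, hx⟩)
    · intro h
      have hsupp : Finset.univ.filter (fun i => x i ≠ 0) = S := by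
        ext i
        rw [Finset.mem_filter]
        have := h i
        by_cases hi : i ∈ S
        · simp only [hi, if_true, Finset.mem_compl, Finset.mem_singleton] at this
          simp [hi, this]
        · simp only [hi, if_false, Finset.mem_singleton] at this
          simp [hi, this]
      exact ⟨Finset.mem_univ x, by rw [mwt, hsupp, hSc], hsupp⟩
  rw [key, Fintype.card_piFinset]
  have : ∀ i, (if i ∈ S then ({0}ᶜ : Finset (ZMod (q i))) else {0}).card
      = if i ∈ S then q i - 1 else 1 := by
    intro i
    by_cases hi : i ∈ S <;> simp [hi, Finset.card_compl, ZMod.card]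
  rw [Finset.prod_congr rfl fun i _ => this i, Finset.prod_ite_mem, Finset.univ_inter]

open MyAux in
/-- For `0 ≤ r < n`,
`(q̂_mh - 1)(n-r)/(r+1) ≤ s_{r+1}/s_r ≤ (q̂_a - 1)(n-r)/(r+1)`, where
`q̂_a = (1/n) ∑ q_i` and `q̂_mh - 1 = n / ∑ 1/(q_i - 1)`. -/
theorem stmt5 (n : ℕ) (hn : 1 ≤ n) (q : Fin n → ℕ) (hq : ∀ i, 2 ≤ q i)
    (r : ℕ) (hr : r < n) :
    ((n : ℝ) / (∑ i : Fin n, 1 / ((q i : ℝ) - 1))) * ((n : ℝ) - r) / ((r : ℝ) + 1)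
        ≤ (sph q (r + 1) : ℝ) / sph q r
      ∧ (sph q (r + 1) : ℝ) / sph q r
        ≤ ((∑ i : Fin n, (q i : ℝ)) / n - 1) * ((n : ℝ) - r) / ((r : ℝ) + 1) := by
  classical
  set a : Fin n → ℝ := fun i => (q i : ℝ) - 1 with ha_def
  have hapos : ∀ i, 0 < a i := fun i => by
    have := hq i
    simp only [ha_def]
    have : (2 : ℝ) ≤ q i := by exact_mod_cast this
    linarith
  have hann : ∀ i, 0 ≤ a i := fun i => (hapos i).le
  have hcardu : (Finset.univ : Finset (Fin n)).card = n := by simp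
  -- cast sph to Es
  have hc : ∀ m, (sph q m : ℝ) = Es a Finset.univ m := by
    intro m
    rw [sph_eq q hq m, Es, Nat.cast_sum]
    refine Finset.sum_congr rfl fun S _ => ?_
    rw [Nat.cast_prod]
    refine Finset.prod_congr rfl fun i _ => ?_
    rw [Nat.cast_sub (by have := hq i; omega)]
    simp [ha_def]
  have hEr : 0 < Es a Finset.univ r := Es_pos hapos (by omega)
  have hEr1 : 0 ≤ Es a Finset.univ (r + 1) := Es_nonneg hann _ _
  have hsum1 : ∑ i : Fin n, a i * Es a (Finset.univ.erase i) r
      = ((r : ℝ) + 1) * Es a Finset.univ (r + 1) := by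
    have := sum_a_Es a (Finset.univ : Finset (Fin n)) r
    exact_mod_cast this
  have hsum2 : ∑ i : Fin n, Es a (Finset.univ.erase i) r
      = ((n : ℝ) - r) * Es a Finset.univ r := by
    have := sum_Es a (Finset.univ : Finset (Fin n)) (m := r) (by omega)
    rwa [hcardu] at this
  have hnpos : (0 : ℝ) < n := by exact_mod_cast hn
  have hr1pos : (0 : ℝ) < (r : ℝ) + 1 := by positivity
  have hnr : (0 : ℝ) ≤ (n : ℝ) - r := by
    have : (r : ℝ) < n := by exact_mod_cast hr
    linarith
  constructor
  · -- lower bound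
    have hanti : AntivaryOn (fun i => 1 / a i)
        (fun i => a i * Es a (Finset.univ.erase i) r) (Finset.univ : Finset (Fin n)) := by
      intro i _ j _ hg
      by_contra hcon
      push_neg at hcon
      have hij : i ≠ j := fun h => by rw [h] at hg; exact lt_irrefl _ hg
      have : a j < a i := lt_of_one_div_lt_one_div (hapos i) hcon
      have := diff2 hann (Finset.mem_univ j) (Finset.mem_univ i) hij.symm r this.le
      exact absurd hg (not_lt.2 this)
    have hcheb := hanti.card_mul_sum_le_sum_mul_sum
    rw [hcardu] at hcheb
    have hsimp : ∑ i : Fin n, (1 / a i) * (a i * Es a (Finset.univ.erase i) r)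
        = ∑ i : Fin n, Es a (Finset.univ.erase i) r := by
      refine Finset.sum_congr rfl fun i _ => ?_
      rw [one_div, inv_mul_cancel_left₀ (hapos i).ne']
    rw [hsimp, hsum2, hsum1] at hcheb
    have hsa : 0 < ∑ i : Fin n, 1 / a i :=
      Finset.sum_pos (fun i _ => one_div_pos.2 (hapos i)) ⟨⟨0, hn⟩, Finset.mem_univ _⟩
    have hgoal : (∑ i : Fin n, 1 / ((q i : ℝ) - 1)) = ∑ i : Fin n, 1 / a i := rfl
    rw [hc r, hc (r + 1), hgoal, div_le_div_iff₀ hr1pos hEr]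
    have key : (n : ℝ) * (((n : ℝ) - r) * Es a Finset.univ r)
        ≤ (∑ i : Fin n, 1 / a i) * (((r : ℝ) + 1) * Es a Finset.univ (r + 1)) := hcheb
    calc (n : ℝ) / (∑ i : Fin n, 1 / a i) * ((n : ℝ) - r) * Es a Finset.univ r
        = ((n : ℝ) * (((n : ℝ) - r) * Es a Finset.univ r)) / (∑ i : Fin n, 1 / a i) := by
          ring
      _ ≤ ((∑ i : Fin n, 1 / a i) * (((r : ℝ) + 1) * Es a Finset.univ (r + 1)))
            / (∑ i : Fin n, 1 / a i) := by
          exact div_le_div_of_nonneg_right key hsa.le |>.trans_eq rfl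
      _ = Es a Finset.univ (r + 1) * ((r : ℝ) + 1) := by
          field_simp
  · -- upper bound
    have hanti : AntivaryOn a
        (fun i => Es a (Finset.univ.erase i) r) (Finset.univ : Finset (Fin n)) := by
      intro i _ j _ hg
      by_contra hcon
      push_neg at hcon
      have hij : i ≠ j := fun h => by rw [h] at hg; exact lt_irrefl _ hg
      have := diff1 hann (Finset.mem_univ i) (Finset.mem_univ j) hij r hcon.le
      exact absurd hg (not_lt.2 this)
    have hcheb := hanti.card_mul_sum_le_sum_mul_sum
    rw [hcardu, hsum1, hsum2] at hcheb
    have hqa : (∑ i : Fin n, (q i : ℝ)) / n - 1 = (∑ i : Fin n, a i) / n := by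
      have : ∑ i : Fin n, a i = (∑ i : Fin n, (q i : ℝ)) - n := by
        simp [ha_def, Finset.sum_sub_distrib, hcardu]
      rw [this]
      field_simp
    rw [hc r, hc (r + 1), hqa, div_le_div_iff₀ hEr hr1pos]
    calc Es a Finset.univ (r + 1) * ((r : ℝ) + 1)
        = ((n : ℝ) * (((r : ℝ) + 1) * Es a Finset.univ (r + 1))) / n := by
          field_simp
      _ ≤ ((∑ i : Fin n, a i) * (((n : ℝ) - r) * Es a Finset.univ r)) / n :=
          div_le_div_of_nonneg_right hcheb hnpos.le |>.trans_eq rfl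
      _ = (∑ i : Fin n, a i) / n * ((n : ℝ) - r) * Es a Finset.univ r := by
          ring
end

section
/- Let d be a positive integer with d < (1−1/q̂_a)·n, and let r be a positive integer with r < J_{q̂_a}(d/n)·n. Then every code C ⊆ Q with minimum distance d satisfies |C| ≤ (|Q|/s_r) · (q̂_a−1)·n·d / (q̂_a·r² − (q̂_a−1)·(2r−d)·n). -/
/-- The arithmetic mean `q̂_a = (1/n) ∑ q_i` of the alphabet sizes. -/
noncomputable def qa {n : ℕ} (q : Fin n → ℕ) : ℝ :=
  (∑ i : Fin n, (q i : ℝ)) / n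

/-- The Johnson radius `J_q(δ) = (1 - 1/q)(1 - √(1 - δ/(1 - 1/q)))`. -/
noncomputable def Jrad (qv δ : ℝ) : ℝ :=
  (1 - 1 / qv) * (1 - Real.sqrt (1 - δ / (1 - 1 / qv)))

/-!
Elias–Bassalygo argument. Averaging over the translates `y + S_r` of the Hamming sphere of radius
`r`, some translate contains at least `|C| s_r / |Q|` codewords. These `M` codewords lie at
distance `r` from `y` and at mutual distance at least `d`, and the Johnson bound controls their
number: counting agreeing pairs coordinatewise and applying Cauchy–Schwarz twice, the total
pairwise distance is at most `2 M² r - (M r)² / ∑ᵢ (1 - 1/qᵢ)`, while it is at least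
`M (M - 1) d`; and `∑ᵢ (1 - 1/qᵢ) ≤ n (1 - 1/q̂_a)` by the AM–HM inequality. Below the Johnson
radius the resulting inequality is solved for `M`.
-/

open Finset

theorem sq_add_sq_sum_erase_div_card_le_sum_sq {α : Type*} [Fintype α] [DecidableEq α]
    (m : α → ℝ) (y : α) :
    m y ^ 2 + (∑ a ∈ univ.erase y, m a) ^ 2 / #(univ.erase y) ≤ ∑ a, m a ^ 2 := by
  rw [← add_sum_erase _ _ (mem_univ y)]
  gcongr
  exact div_le_of_le_mul₀ (Nat.cast_nonneg _) (sum_nonneg fun _ _ ↦ sq_nonneg _)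
    (sq_sum_le_card_mul_sum_sq.trans_eq (mul_comm _ _))

theorem sum_one_sub_one_div_le {ι : Type*} (s : Finset ι) (x : ι → ℝ) (hx : ∀ i ∈ s, 0 < x i) :
    ∑ i ∈ s, (1 - 1 / x i) ≤ #s * (1 - #s / ∑ i ∈ s, x i) := by
  have hAMHM := sq_sum_div_le_sum_sq_div s (fun _ ↦ (1 : ℝ)) hx
  simp only [sum_const, nsmul_eq_mul, mul_one, one_pow] at hAMHM
  rw [sum_sub_distrib, sum_const, nsmul_eq_mul, mul_one, mul_sub, mul_one, ← mul_div_assoc, ← sq]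
  linarith

theorem one_sub_one_div_card_pos {α : Type*} [Fintype α] (hα : 1 < Fintype.card α) :
    (0 : ℝ) < 1 - 1 / Fintype.card α :=
  sub_pos.2 <| (div_lt_one (by positivity)).2 (by exact_mod_cast hα)

section Coordinate

variable {β α : Type*} [Fintype α] [DecidableEq α]

theorem card_filter_product_eq_eq_sum_sq (B : Finset β) (f : β → α) :
    #{p ∈ B ×ˢ B | f p.1 = f p.2} = ∑ a, #{b ∈ B | f b = a} ^ 2 := by
  rw [card_eq_sum_card_fiberwise (f := fun p ↦ f p.1) (t := univ) (fun _ _ ↦ mem_univ _)]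
  refine sum_congr rfl fun a _ ↦ ?_
  rw [sq, ← card_product]
  congr 1
  ext ⟨b, b'⟩
  simp only [mem_filter, mem_product]
  grind

/-- With `s = #{b ∈ B | f b ≠ y}`, the `#B - s` elements sent to `y` form one fibre; by
Cauchy–Schwarz the other `s` give the fewest agreeing pairs when spread evenly over the remaining
`card α - 1` fibres. -/
theorem card_filter_product_ne_le (B : Finset β) (f : β → α) (y : α) (hα : 1 < Fintype.card α) :
    (#{p ∈ B ×ˢ B | f p.1 ≠ f p.2} : ℝ)
      ≤ 2 * #B * #{b ∈ B | f b ≠ y}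
        - (#{b ∈ B | f b ≠ y} : ℝ) ^ 2 / (1 - 1 / Fintype.card α) := by
  set s := #{b ∈ B | f b ≠ y}
  have hpairs : (#{p ∈ B ×ˢ B | f p.1 ≠ f p.2} : ℝ)
      = #B ^ 2 - ∑ a, (#{b ∈ B | f b = a} : ℝ) ^ 2 := by
    have := card_filter_add_card_filter_not (s := B ×ˢ B) (fun p ↦ f p.1 = f p.2)
    rw [card_filter_product_eq_eq_sum_sq, card_product, ← sq] at this
    rw [eq_sub_iff_add_eq]
    exact_mod_cast (add_comm _ _).trans this
  have hfiber_y : (#{b ∈ B | f b = y} : ℝ) = #B - s := by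
    rw [eq_sub_iff_add_eq]
    exact_mod_cast card_filter_add_card_filter_not (s := B) (fun b ↦ f b = y)
  have hfibers_ne : ∑ a ∈ univ.erase y, (#{b ∈ B | f b = a} : ℝ) = s := by
    rw [← Nat.cast_sum, sum_card_fiberwise_eq_card_filter]
    simp [s]
  have hCS := sq_add_sq_sum_erase_div_card_le_sum_sq (fun a ↦ (#{b ∈ B | f b = a} : ℝ)) y
  rw [hfiber_y, hfibers_ne, cast_card_erase_of_mem (mem_univ y), card_univ] at hCS
  have hweight : (s : ℝ) ^ 2 / (1 - 1 / Fintype.card α)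
      = s ^ 2 + s ^ 2 / (Fintype.card α - 1) := by
    have : (Fintype.card α : ℝ) - 1 ≠ 0 := sub_ne_zero.2 (by exact_mod_cast hα.ne')
    field_simp
    ring
  rw [hpairs, hweight]
  linear_combination hCS

end Coordinate

section Johnson

variable {ι : Type*} [Fintype ι] {α : ι → Type*} [∀ i, DecidableEq (α i)]

theorem sum_sum_hammingDist_eq (B : Finset (∀ i, α i)) :
    ∑ c ∈ B, ∑ c' ∈ B, hammingDist c c' = ∑ i, #{p ∈ B ×ˢ B | p.1 i ≠ p.2 i} := by
  simp only [hammingDist, card_filter, sum_product]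
  exact (sum_congr rfl fun _ _ ↦ sum_comm).trans sum_comm

theorem sum_card_filter_ne_eq_sum_hammingDist (B : Finset (∀ i, α i)) (y : ∀ i, α i) :
    ∑ i, #{c ∈ B | c i ≠ y i} = ∑ c ∈ B, hammingDist c y := by
  simp only [hammingDist, card_filter]
  exact sum_comm

theorem card_mul_card_sub_one_mul_le_sum_sum_hammingDist {B : Finset (∀ i, α i)} {d : ℕ}
    (hd : ∀ c ∈ B, ∀ c' ∈ B, c ≠ c' → d ≤ hammingDist c c') :
    (#B : ℝ) * (#B - 1) * d ≤ ∑ c ∈ B, ∑ c' ∈ B, (hammingDist c c' : ℝ) := by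
  rw [mul_assoc, ← nsmul_eq_mul, ← sum_const]
  refine sum_le_sum fun c hc ↦ ?_
  calc ((#B : ℝ) - 1) * d = ∑ c' ∈ B.erase c, (d : ℝ) := by
        rw [sum_const, nsmul_eq_mul, cast_card_erase_of_mem hc]
    _ ≤ ∑ c' ∈ B.erase c, (hammingDist c c' : ℝ) := by
        refine sum_le_sum fun c' hc' ↦ ?_
        exact_mod_cast hd c hc c' (mem_of_mem_erase hc') (ne_of_mem_erase hc').symm
    _ ≤ ∑ c' ∈ B, (hammingDist c c' : ℝ) :=
        sum_le_sum_of_subset_of_nonneg (erase_subset _ _) fun _ _ _ ↦ Nat.cast_nonneg _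

theorem sum_sum_hammingDist_le_of_forall_hammingDist_eq [∀ i, Fintype (α i)]
    (hα : ∀ i, 1 < Fintype.card (α i)) (B : Finset (∀ i, α i)) (y : ∀ i, α i) {r : ℕ}
    (hr : ∀ c ∈ B, hammingDist c y = r) :
    ∑ c ∈ B, ∑ c' ∈ B, (hammingDist c c' : ℝ)
      ≤ 2 * #B ^ 2 * r - (#B * r) ^ 2 / ∑ i, (1 - 1 / (Fintype.card (α i) : ℝ)) := by
  have hs : ∑ i, (#{c ∈ B | c i ≠ y i} : ℝ) = #B * r := by
    rw [← Nat.cast_sum, sum_card_filter_ne_eq_sum_hammingDist, sum_congr rfl hr, sum_const,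
      smul_eq_mul, Nat.cast_mul]
  calc ∑ c ∈ B, ∑ c' ∈ B, (hammingDist c c' : ℝ)
      = ∑ i, (#{p ∈ B ×ˢ B | p.1 i ≠ p.2 i} : ℝ) := by
        exact_mod_cast sum_sum_hammingDist_eq B
    _ ≤ ∑ i, (2 * #B * #{c ∈ B | c i ≠ y i}
          - (#{c ∈ B | c i ≠ y i} : ℝ) ^ 2 / (1 - 1 / Fintype.card (α i))) :=
        sum_le_sum fun i _ ↦ card_filter_product_ne_le B (· i) (y i) (hα i)
    _ = 2 * #B ^ 2 * r
          - ∑ i, (#{c ∈ B | c i ≠ y i} : ℝ) ^ 2 / (1 - 1 / Fintype.card (α i)) := by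
        rw [sum_sub_distrib, ← mul_sum, hs]
        ring
    _ ≤ 2 * #B ^ 2 * r - (#B * r) ^ 2 / ∑ i, (1 - 1 / (Fintype.card (α i) : ℝ)) := by
        rw [← hs]
        exact sub_le_sub_left
          (sq_sum_div_le_sum_sq_div _ _ fun i _ ↦ one_sub_one_div_card_pos (hα i)) _

theorem card_mul_sub_le_of_forall_hammingDist_eq [∀ i, Fintype (α i)] [Nonempty ι]
    (hα : ∀ i, 1 < Fintype.card (α i))
    {B : Finset (∀ i, α i)} {d : ℕ} (hd : ∀ c ∈ B, ∀ c' ∈ B, c ≠ c' → d ≤ hammingDist c c')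
    (y : ∀ i, α i) {r : ℕ} (hr : ∀ c ∈ B, hammingDist c y = r)
    {G : ℝ} (hG : ∑ i, (1 - 1 / (Fintype.card (α i) : ℝ)) ≤ G) :
    (#B : ℝ) * (r ^ 2 - G * (2 * r - d)) ≤ G * d := by
  have hw := sum_pos (fun i _ ↦ one_sub_one_div_card_pos (hα i)) (univ_nonempty (α := ι))
  have hG0 : 0 < G := hw.trans_le hG
  have key : (#B : ℝ) * (#B - 1) * d ≤ 2 * #B ^ 2 * r - (#B * r) ^ 2 / G :=
    (card_mul_card_sub_one_mul_le_sum_sum_hammingDist hd).trans <|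
      (sum_sum_hammingDist_le_of_forall_hammingDist_eq hα B y hr).trans <| by gcongr
  rw [le_sub_iff_add_le, ← le_sub_iff_add_le', div_le_iff₀ hG0] at key
  rcases (#B).eq_zero_or_pos with hB | hB
  · simpa [hB] using mul_nonneg hG0.le d.cast_nonneg
  refine le_of_mul_le_mul_left ?_ (Nat.cast_pos.2 hB)
  linear_combination key

end Johnson

section Averaging

variable {X : Type*} [AddGroup X] [Fintype X] [DecidableEq X]

theorem sum_card_filter_sub_mem (C S : Finset X) :
    ∑ y, #{c ∈ C | c - y ∈ S} = #C * #S := by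
  simp only [card_filter]
  rw [sum_comm, ← smul_eq_mul, ← sum_const]
  refine sum_congr rfl fun c _ ↦ ?_
  exact (Fintype.sum_equiv (Equiv.subLeft c) _ (fun x ↦ if x ∈ S then 1 else 0) fun _ ↦ rfl).trans
    (by simp)

theorem card_le_card_div_card_mul_of_card_filter_sub_mem_le (C S : Finset X) (hS : S.Nonempty)
    {K : ℝ} (hK : ∀ y, (#{c ∈ C | c - y ∈ S} : ℝ) ≤ K) :
    (#C : ℝ) ≤ Fintype.card X / #S * K := by
  obtain ⟨y, -, hy⟩ := exists_le_of_sum_le (univ_nonempty (α := X))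
    (f := fun _ ↦ #C * #S) (g := fun y ↦ Fintype.card X * #{c ∈ C | c - y ∈ S})
    (by rw [sum_const, ← mul_sum, sum_card_filter_sub_mem, card_univ, smul_eq_mul])
  have hy' : (#C * #S : ℝ) ≤ Fintype.card X * #{c ∈ C | c - y ∈ S} := by exact_mod_cast hy
  rw [div_mul_eq_mul_div, le_div_iff₀ (by exact_mod_cast hS.card_pos)]
  exact hy'.trans (by gcongr; exact hK y)

end Averaging

theorem exists_hammingNorm_eq {ι : Type*} [Fintype ι] {β : ι → Type*} [∀ i, Zero (β i)]
    [∀ i, One (β i)] [∀ i, NeZero (1 : β i)] [∀ i, DecidableEq (β i)] {r : ℕ}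
    (hr : r ≤ Fintype.card ι) : ∃ x : ∀ i, β i, hammingNorm x = r := by
  classical
  obtain ⟨s, -, rfl⟩ := exists_subset_card_eq (s := (univ : Finset ι)) hr
  refine ⟨fun i ↦ if i ∈ s then 1 else 0, ?_⟩
  simp [hammingNorm]

theorem Jrad_le {qv : ℝ} (hθ : 0 ≤ 1 - 1 / qv) (δ : ℝ) : Jrad qv δ ≤ 1 - 1 / qv :=
  mul_le_of_le_one_right hθ (sub_le_self _ (Real.sqrt_nonneg _))

theorem mul_two_mul_sub_lt_sq_of_lt_Jrad {qv n d r : ℝ} (hn : 0 < n) (hθ : 0 < 1 - 1 / qv)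
    (hd : d ≤ (1 - 1 / qv) * n) (hr : r < Jrad qv (d / n) * n) :
    (1 - 1 / qv) * n * (2 * r - d) < r ^ 2 := by
  set θ := 1 - 1 / qv
  set t := Real.sqrt (1 - d / n / θ)
  have ht : θ * n * t ^ 2 = θ * n - d := by
    rw [Real.sq_sqrt (by rw [sub_nonneg, div_div, div_le_one (by positivity)]; linarith)]
    field_simp
  have hlt : θ * n * t < θ * n - r := by
    have : r < θ * (1 - t) * n := hr
    linarith
  have hsq := pow_lt_pow_left₀ hlt (by positivity) two_ne_zero
  rw [show (θ * n * t) ^ 2 = θ * n * (θ * n * t ^ 2) by ring, ht] at hsq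
  nlinarith

section MixedAlphabet

variable {n : ℕ} {q : Fin n → ℕ}

theorem mwt_sub_eq_hammingDist (x y : ∀ i, ZMod (q i)) : mwt (x - y) = hammingDist x y := by
  simp only [mwt, hammingDist, Pi.sub_apply, sub_ne_zero]

theorem card_filter_mwt_eq_sph [∀ i, NeZero (q i)] (r : ℕ) :
    #{x : ∀ i, ZMod (q i) | mwt x = r} = sph q r := by
  rw [sph, Nat.card_eq_fintype_card, Fintype.card_subtype]

theorem sph_pos (hq : ∀ i, 2 ≤ q i) {r : ℕ} (hr : r ≤ n) : 0 < sph q r := by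
  have (i : Fin n) : Fact (1 < q i) := ⟨hq i⟩
  obtain ⟨x, hx⟩ := exists_hammingNorm_eq (β := fun i ↦ ZMod (q i)) (by simpa using hr)
  have : Nonempty {x : ∀ i, ZMod (q i) // mwt x = r} := ⟨⟨x, hx⟩⟩
  exact Nat.card_pos

theorem qa_pos (hq : ∀ i, 0 < q i) (hn : 0 < n) : 0 < qa q :=
  div_pos (sum_pos (fun i _ ↦ Nat.cast_pos.2 (hq i)) (univ_nonempty_iff.2 ⟨⟨0, hn⟩⟩))
    (Nat.cast_pos.2 hn)

theorem card_le_of_forall_mwt_sub_eq (hq : ∀ i, 2 ≤ q i) (hn : 0 < n) {d r : ℕ}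
    (hP : 0 < qa q * (r : ℝ) ^ 2 - (qa q - 1) * (2 * (r : ℝ) - d) * n)
    {B : Finset (∀ i, ZMod (q i))} (hd : ∀ c ∈ B, ∀ c' ∈ B, c ≠ c' → d ≤ mwt (c - c'))
    (y : ∀ i, ZMod (q i)) (hr : ∀ c ∈ B, mwt (c - y) = r) :
    (#B : ℝ) ≤ (qa q - 1) * n * d / (qa q * (r : ℝ) ^ 2 - (qa q - 1) * (2 * (r : ℝ) - d) * n) := by
  have (i : Fin n) : NeZero (q i) := ⟨by have := hq i; omega⟩
  have : Nonempty (Fin n) := ⟨⟨0, hn⟩⟩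
  have hqa := qa_pos (fun i ↦ zero_lt_two.trans_le (hq i)) hn
  have hG : ∑ i, (1 - 1 / (Fintype.card (ZMod (q i)) : ℝ)) ≤ (1 - 1 / qa q) * n := by
    simpa only [ZMod.card, card_univ, Fintype.card_fin, qa, one_div_div, mul_comm]
      using sum_one_sub_one_div_le univ (fun i ↦ (q i : ℝ)) fun i _ ↦ by have := hq i; positivity
  have hB := card_mul_sub_le_of_forall_hammingDist_eq (fun i ↦ by rw [ZMod.card]; exact hq i)
    (fun c hc c' hc' hne ↦ mwt_sub_eq_hammingDist c c' ▸ hd c hc c' hc' hne) y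
    (fun c hc ↦ mwt_sub_eq_hammingDist c y ▸ hr c hc) hG
  rw [le_div_iff₀ hP]
  calc (#B : ℝ) * (qa q * r ^ 2 - (qa q - 1) * (2 * r - d) * n)
      = qa q * (#B * (r ^ 2 - (1 - 1 / qa q) * n * (2 * r - d))) := by field_simp
    _ ≤ qa q * ((1 - 1 / qa q) * n * d) := by gcongr
    _ = (qa q - 1) * n * d := by field_simp

end MixedAlphabet

theorem stmt12_general (n : ℕ) (q : Fin n → ℕ) (hq : ∀ i, 2 ≤ q i)
    (d : ℕ) (hdn : (d : ℝ) < (1 - 1 / qa q) * n)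
    (r : ℕ) (hrJ : (r : ℝ) < Jrad (qa q) ((d : ℝ) / n) * n)
    (C : Set (∀ i, ZMod (q i)))
    (hdist : ∀ x ∈ C, ∀ y ∈ C, x ≠ y → d ≤ mwt (x - y)) :
    (Nat.card C : ℝ)
      ≤ ((Nat.card (∀ i, ZMod (q i)) : ℝ) / sph q r)
          * ((qa q - 1) * n * d
              / (qa q * (r : ℝ) ^ 2 - (qa q - 1) * (2 * (r : ℝ) - d) * n)) := by
  classical
  have (i : Fin n) : NeZero (q i) := ⟨by have := hq i; omega⟩
  have hθn : 0 < (1 - 1 / qa q) * n := (Nat.cast_nonneg d).trans_lt hdn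
  have hn : 0 < n := Nat.pos_of_ne_zero fun h ↦ by simp [h] at hθn
  have hθ : 0 < 1 - 1 / qa q := pos_of_mul_pos_left hθn n.cast_nonneg
  have hqa := qa_pos (fun i ↦ zero_lt_two.trans_le (hq i)) hn
  have hP : 0 < qa q * (r : ℝ) ^ 2 - (qa q - 1) * (2 * (r : ℝ) - d) * n := by
    have hJ := mul_two_mul_sub_lt_sq_of_lt_Jrad (Nat.cast_pos.2 hn) hθ hdn.le hrJ
    calc 0 < qa q * (r ^ 2 - (1 - 1 / qa q) * n * (2 * r - d)) := mul_pos hqa (sub_pos.2 hJ)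
      _ = _ := by field_simp
  have hrn : (r : ℝ) ≤ n := hrJ.le.trans (by nlinarith [Jrad_le hθ.le (d / n), one_div_pos.2 hqa])
  rw [Nat.card_coe_set_eq, Set.ncard_eq_toFinset_card', Nat.card_eq_fintype_card,
    ← card_filter_mwt_eq_sph]
  refine card_le_card_div_card_mul_of_card_filter_sub_mem_le _ _
    (card_pos.1 ((card_filter_mwt_eq_sph (q := q) r).symm ▸ sph_pos hq (by exact_mod_cast hrn)))
    fun y ↦ card_le_of_forall_mwt_sub_eq hq hn hP (fun c hc c' hc' ↦ ?_) y fun c hc ↦ ?_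
  · simp only [mem_filter, Set.mem_toFinset] at hc hc'
    exact hdist c hc.1 c' hc'.1
  · exact (mem_filter.1 (mem_filter.1 hc).2).2

/-- The Elias-Bassalygo bound for mixed codes: for `0 < d < (1 - 1/q̂_a) n` and
`0 < r < J_{q̂_a}(d/n) n`, every code `C ⊆ Q` of minimum distance `d` satisfies
`|C| ≤ (|Q|/s_r) (q̂_a - 1) n d / (q̂_a r² - (q̂_a - 1)(2r - d) n)`. -/
theorem stmt12 (n : ℕ) (hn : 1 ≤ n) (q : Fin n → ℕ) (hq : ∀ i, 2 ≤ q i)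
    (d : ℕ) (hd : 0 < d) (hdn : (d : ℝ) < (1 - 1 / qa q) * n)
    (r : ℕ) (hr : 0 < r) (hrJ : (r : ℝ) < Jrad (qa q) ((d : ℝ) / n) * n)
    (C : Set (∀ i, ZMod (q i)))
    (hdist : ∀ x ∈ C, ∀ y ∈ C, x ≠ y → d ≤ mwt (x - y)) :
    (Nat.card C : ℝ)
      ≤ ((Nat.card (∀ i, ZMod (q i)) : ℝ) / sph q r)
          * ((qa q - 1) * n * d
              / (qa q * (r : ℝ) ^ 2 - (qa q - 1) * (2 * (r : ℝ) - d) * n)) :=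
  stmt12_general n q hq d hdn r hrJ C hdist
end

section
/- For every integer 1 ≤ d ≤ n+1 there exists a code C ⊆ Q with minimum distance d such that |C| ≥ |Q| / ∑_{k=0}^{d−1} s_k (the Gilbert–Varshamov bound for mixed codes). -/
section aux
variable {n : ℕ} {q : Fin n → ℕ} [∀ i, NeZero (q i)]

lemma mwt_zero : mwt (0 : ∀ i, ZMod (q i)) = 0 := by
  simp [mwt]

lemma mwt_sub_comm (x y : ∀ i, ZMod (q i)) : mwt (x - y) = mwt (y - x) := by
  unfold mwt
  congr 1
  apply Finset.filter_congr
  intro i _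
  simp [sub_eq_zero, eq_comm]

lemma sph_eq_s16 (r : ℕ) :
    sph q r = (Finset.univ.filter (fun x : ∀ i, ZMod (q i) => mwt x = r)).card := by
  rw [sph, Nat.card_eq_fintype_card, Fintype.card_subtype]

lemma ball_card (c : ∀ i, ZMod (q i)) (d : ℕ) :
    (Finset.univ.filter (fun x : ∀ i, ZMod (q i) => mwt (x - c) < d)).card
      = ∑ k ∈ Finset.range d, sph q k := by
  have h1 : (Finset.univ.filter (fun x : ∀ i, ZMod (q i) => mwt (x - c) < d)).card
      = (Finset.univ.filter (fun x : ∀ i, ZMod (q i) => mwt x < d)).card := by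
    apply Finset.card_bij' (fun x _ => x - c) (fun y _ => y + c)
    · intro x hx; simp only [Finset.mem_filter, Finset.mem_univ, true_and] at *; exact hx
    · intro y hy; simp only [Finset.mem_filter, Finset.mem_univ, true_and] at *
      simpa using hy
    · intro x _; simp
    · intro y _; simp
  rw [h1]
  have h2 : (Finset.univ.filter (fun x : ∀ i, ZMod (q i) => mwt x < d))
      = (Finset.range d).biUnion
          (fun k => Finset.univ.filter (fun x : ∀ i, ZMod (q i) => mwt x = k)) := by
    ext x
    simp [Finset.mem_biUnion]
  rw [h2, Finset.card_biUnion]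
  · exact Finset.sum_congr rfl (fun k _ => (sph_eq_s16 k).symm)
  · intro a _ b _ hab
    simp only [Finset.disjoint_left, Finset.mem_filter]
    rintro x ⟨_, h1⟩ ⟨_, h2⟩
    exact hab (h1 ▸ h2 ▸ rfl)

end aux

/-- The Gilbert-Varshamov bound for mixed codes: for `1 ≤ d ≤ n + 1` there is a
code `C ⊆ Q` of minimum distance `d` with `|C| ≥ |Q| / ∑_{k=0}^{d-1} s_k`. -/
theorem stmt16 (n : ℕ) (hn : 1 ≤ n) (q : Fin n → ℕ) (hq : ∀ i, 2 ≤ q i)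
    (d : ℕ) (hd1 : 1 ≤ d) (hd2 : d ≤ n + 1) :
    ∃ C : Set (∀ i, ZMod (q i)),
      (∀ x ∈ C, ∀ y ∈ C, x ≠ y → d ≤ mwt (x - y))
      ∧ (Nat.card (∀ i, ZMod (q i)) : ℝ) / (∑ k ∈ Finset.range d, (sph q k : ℝ))
          ≤ Nat.card C := by
  classical
  haveI : ∀ i, NeZero (q i) := fun i => ⟨by have := hq i; omega⟩
  set Q := ∀ i, ZMod (q i)
  set P : Finset Q → Prop := fun S => ∀ x ∈ S, ∀ y ∈ S, x ≠ y → d ≤ mwt (x - y) with hP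
  obtain ⟨S, hS, hmax⟩ := Finset.exists_max_image (Finset.univ.filter P) Finset.card
    ⟨∅, by simp [hP]⟩
  simp only [Finset.mem_filter, Finset.mem_univ, true_and] at hS
  have hmax' : ∀ T, P T → T.card ≤ S.card := by
    intro T hT
    exact hmax T (Finset.mem_filter.2 ⟨Finset.mem_univ _, hT⟩)
  -- covering
  have hcov : ∀ x : Q, ∃ c ∈ S, mwt (x - c) < d := by
    intro x
    by_cases hx : x ∈ S
    · exact ⟨x, hx, by rw [sub_self, mwt_zero]; exact hd1⟩
    by_contra h
    push_neg at h
    have hPT : P (insert x S) := by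
      intro a ha b hb hab
      rcases Finset.mem_insert.1 ha with rfl | ha'
      · rcases Finset.mem_insert.1 hb with rfl | hb'
        · exact absurd rfl hab
        · exact h b hb'
      · rcases Finset.mem_insert.1 hb with rfl | hb'
        · rw [mwt_sub_comm]; exact h a ha'
        · exact hS a ha' b hb' hab
    have := hmax' _ hPT
    rw [Finset.card_insert_of_notMem hx] at this
    omega
  -- counting
  have hcount : Fintype.card Q ≤ S.card * ∑ k ∈ Finset.range d, sph q k := by
    have hsub : (Finset.univ : Finset Q) ⊆
        S.biUnion (fun c => Finset.univ.filter (fun x => mwt (x - c) < d)) := by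
      intro x _
      obtain ⟨c, hc, hcd⟩ := hcov x
      exact Finset.mem_biUnion.2 ⟨c, hc, by simp [hcd]⟩
    calc Fintype.card Q = (Finset.univ : Finset Q).card := (Finset.card_univ).symm
      _ ≤ _ := Finset.card_le_card hsub
      _ ≤ ∑ c ∈ S, (Finset.univ.filter (fun x => mwt (x - c) < d)).card :=
          Finset.card_biUnion_le
      _ = ∑ c ∈ S, ∑ k ∈ Finset.range d, sph q k := by
          exact Finset.sum_congr rfl (fun c _ => ball_card c d)
      _ = S.card * ∑ k ∈ Finset.range d, sph q k := by
          rw [Finset.sum_const, smul_eq_mul]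
  refine ⟨↑S, by exact_mod_cast hS, ?_⟩
  have hV : (0:ℝ) < ∑ k ∈ Finset.range d, (sph q k : ℝ) := by
    have h0 : (1:ℝ) ≤ (sph q 0 : ℝ) := by
      have : 1 ≤ sph q 0 := by
        rw [sph_eq_s16]
        exact Finset.card_pos.2 ⟨0, by simp [mwt_zero]⟩
      exact_mod_cast this
    have := Finset.single_le_sum (f := fun k => (sph q k : ℝ))
      (fun k _ => by positivity) (Finset.mem_range.2 hd1)
    linarith
  rw [div_le_iff₀ hV]
  have hcard : (Nat.card (↑S : Set Q) : ℝ) = S.card := by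
    rw [Nat.card_coe_set_eq, Set.ncard_coe_finset]
  rw [hcard, Nat.card_eq_fintype_card]
  calc (Fintype.card Q : ℝ) ≤ (S.card * ∑ k ∈ Finset.range d, sph q k : ℕ) := by
        exact_mod_cast hcount
    _ = S.card * ∑ k ∈ Finset.range d, (sph q k : ℝ) := by push_cast; ring
end
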